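/- arXiv:1807.04308 — 5 statements merged into one kernel-verified Lean document; each statement's English description precedes it below -/
import Mathlib

section
/- Let G=(A,B,E) be a finite bipartite graph with nonnegative real edge weights w(a,b), capacities q(a)=∑_{b∈N(a)} w(a,b), and client weights w(b) ≤ ∑_{a∈N(b)} w(a,b). Let f:B→A be any assignment with f(b)∈N(b). Define A₀ = {a : ∑_{b:f(b)=a} w(b) > q(a) + max_b w(b)}, B₀ = f⁻¹(A₀), and inductively A_i = N(B_{i−1}) \ ⋃_{j<i} A_j, B_i = f⁻¹(A_i). If A₀ is nonempty, then there exists some i ≥ 1 and a facility a ∈ A_i with ∑_{b:f(b)=a} w(b) ≤ q(a). -/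
/-!
Suppose every facility at a level `i ≥ 1` is overloaded. Facilities at level `0` are overloaded
too, so every facility in the union `S` of all levels has load exceeding its capacity. But `S` is
closed: every neighbour of a client assigned into `S` lies in `S` (it lies at that client's level
plus one, if not earlier). Hence the clients assigned into `S` can only draw on edges inside `S`,
and their total weight, which is the total load of `S`, is at most the total capacity of `S`.
-/

open Finset

theorem exists_load_le_capacity_of_closed {A B : Type} [Fintype A] [Fintype B] [DecidableEq A]
    (adj : A → B → Prop) [∀ a b, Decidable (adj a b)]
    (w : A → B → ℝ) (hw : ∀ a b, 0 ≤ w a b)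
    (wb : B → ℝ) (hwb : ∀ b, wb b ≤ ∑ a ∈ univ.filter (fun a => adj a b), w a b)
    (f : B → A) (S : Finset A) (hS : S.Nonempty)
    (hclosed : ∀ b, f b ∈ S → ∀ a, adj a b → a ∈ S) :
    ∃ a ∈ S, (∑ b ∈ univ.filter (fun b => f b = a), wb b) ≤
      ∑ b ∈ univ.filter (fun b => adj a b), w a b := by
  by_contra! hover
  set T := univ.filter (fun b => f b ∈ S)
  have hswap : ∑ b ∈ T, ∑ a ∈ univ.filter (fun a => adj a b), w a b =
      ∑ a ∈ S, ∑ b ∈ T.filter (fun b => adj a b), w a b :=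
    sum_comm' fun b a => by
      simp only [T, mem_filter, mem_univ, true_and]
      exact ⟨fun h => ⟨h, hclosed b h.1 a h.2⟩, fun h => h.1⟩
  have := calc
    ∑ a ∈ S, ∑ b ∈ univ.filter (fun b => adj a b), w a b
        < ∑ a ∈ S, ∑ b ∈ univ.filter (fun b => f b = a), wb b :=
          sum_lt_sum_of_nonempty hS hover
    _ = ∑ b ∈ T, wb b := sum_fiberwise_eq_sum_filter _ _ _ _
    _ ≤ ∑ b ∈ T, ∑ a ∈ univ.filter (fun a => adj a b), w a b := sum_le_sum fun b _ => hwb b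
    _ = ∑ a ∈ S, ∑ b ∈ T.filter (fun b => adj a b), w a b := hswap
    _ ≤ ∑ a ∈ S, ∑ b ∈ univ.filter (fun b => adj a b), w a b :=
          sum_le_sum fun a _ => sum_le_sum_of_subset_of_nonneg
            (filter_subset_filter _ (subset_univ _)) fun b _ _ => hw a b
  exact lt_irrefl _ this

theorem exists_mem_level_of_adj {A B : Type} (adj : A → B → Prop) (f : B → A)
    (Asets : ℕ → Finset A) (Bsets : ℕ → Finset B)
    (hB : ∀ i b, b ∈ Bsets i ↔ f b ∈ Asets i)
    (hAsucc : ∀ i a, a ∈ Asets (i + 1) ↔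
      ((∃ b ∈ Bsets i, adj a b) ∧ ∀ j ≤ i, a ∉ Asets j))
    {i : ℕ} {a : A} {b : B} (hb : f b ∈ Asets i) (hab : adj a b) :
    ∃ j, a ∈ Asets j := by
  by_cases hearlier : ∃ j ≤ i, a ∈ Asets j
  · obtain ⟨j, -, hj⟩ := hearlier
    exact ⟨j, hj⟩
  · exact ⟨i + 1, (hAsucc i a).2
      ⟨⟨b, (hB i b).2 hb, hab⟩, fun j hj haj => hearlier ⟨j, hj, haj⟩⟩⟩

theorem stmt_1_general {A B : Type} [Fintype A] [Fintype B] [DecidableEq A] [Nonempty B]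
    (adj : A → B → Prop) [∀ a b, Decidable (adj a b)]
    (w : A → B → ℝ) (hw : ∀ a b, 0 ≤ w a b)
    (wb : B → ℝ) (hwb0 : ∀ b, 0 ≤ wb b)
    (hwb : ∀ b, wb b ≤ ∑ a ∈ Finset.univ.filter (fun a => adj a b), w a b)
    (f : B → A)
    (Asets : ℕ → Finset A) (Bsets : ℕ → Finset B)
    (hA0 : ∀ a, a ∈ Asets 0 ↔
      (∑ b ∈ Finset.univ.filter (fun b => adj a b), w a b) +
        Finset.univ.sup' Finset.univ_nonempty wb <
        (∑ b ∈ Finset.univ.filter (fun b => f b = a), wb b))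
    (hB : ∀ i b, b ∈ Bsets i ↔ f b ∈ Asets i)
    (hAsucc : ∀ i a, a ∈ Asets (i + 1) ↔
      ((∃ b ∈ Bsets i, adj a b) ∧ ∀ j ≤ i, a ∉ Asets j))
    (hne : (Asets 0).Nonempty) :
    ∃ i, 1 ≤ i ∧ ∃ a ∈ Asets i,
      (∑ b ∈ Finset.univ.filter (fun b => f b = a), wb b) ≤
        ∑ b ∈ Finset.univ.filter (fun b => adj a b), w a b := by
  classical
  set S := univ.filter (fun a => ∃ i, a ∈ Asets i)
  have hS : S.Nonempty := hne.mono fun a ha => mem_filter.2 ⟨mem_univ a, 0, ha⟩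
  have hclosed : ∀ b, f b ∈ S → ∀ a, adj a b → a ∈ S := fun b hb a hab => by
    obtain ⟨i, hi⟩ := (mem_filter.1 hb).2
    exact mem_filter.2 ⟨mem_univ a, exists_mem_level_of_adj adj f Asets Bsets hB hAsucc hi hab⟩
  obtain ⟨a, ha, hload⟩ := exists_load_le_capacity_of_closed adj w hw wb hwb f S hS hclosed
  obtain ⟨i, hai⟩ := (mem_filter.1 ha).2
  rcases Nat.eq_zero_or_pos i with rfl | hi
  · have hmax : 0 ≤ univ.sup' univ_nonempty wb :=
      (hwb0 (Classical.arbitrary B)).trans (le_sup' wb (mem_univ _))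
    linarith [(hA0 a).1 hai]
  · exact ⟨i, hi, a, hai, hload⟩

/-- Key invariant in the proof of the reassignment lemma: given any feasible
assignment `f`, define the level sets `A₀ = {a : load a > q a + max_b wb b}`,
`B i = f⁻¹(A i)`, `A (i+1) = N(B i) \ ⋃_{j ≤ i} A j`.  If `A₀` is nonempty,
then some facility at a level `i ≥ 1` is underloaded (`load a ≤ q a`). -/
theorem stmt_1 {A B : Type} [Fintype A] [Fintype B] [DecidableEq A] [Nonempty B]
    (adj : A → B → Prop) [∀ a b, Decidable (adj a b)]
    (w : A → B → ℝ) (hw : ∀ a b, 0 ≤ w a b)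
    (wb : B → ℝ) (hwb0 : ∀ b, 0 ≤ wb b)
    (hwb : ∀ b, wb b ≤ ∑ a ∈ Finset.univ.filter (fun a => adj a b), w a b)
    (f : B → A) (hf : ∀ b, adj (f b) b)
    (Asets : ℕ → Finset A) (Bsets : ℕ → Finset B)
    (hA0 : ∀ a, a ∈ Asets 0 ↔
      (∑ b ∈ Finset.univ.filter (fun b => adj a b), w a b) +
        Finset.univ.sup' Finset.univ_nonempty wb <
        (∑ b ∈ Finset.univ.filter (fun b => f b = a), wb b))
    (hB : ∀ i b, b ∈ Bsets i ↔ f b ∈ Asets i)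
    (hAsucc : ∀ i a, a ∈ Asets (i + 1) ↔
      ((∃ b ∈ Bsets i, adj a b) ∧ ∀ j ≤ i, a ∉ Asets j))
    (hne : (Asets 0).Nonempty) :
    ∃ i, 1 ≤ i ∧ ∃ a ∈ Asets i,
      (∑ b ∈ Finset.univ.filter (fun b => f b = a), wb b) ≤
        ∑ b ∈ Finset.univ.filter (fun b => adj a b), w a b :=
  stmt_1_general adj w hw wb hwb0 hwb f Asets Bsets hA0 hB hAsucc hne
end

section
/- Let G=(A,B,E) be a finite bipartite graph with nonnegative edge weights, capacities q(a)=∑_{b∈N(a)} w(a,b), and client weights satisfying w(b) ≤ ∑_{a∈N(b)} w(a,b). Let f:B→A be an assignment with f(b)∈N(b), and define the level sets A_i, B_i as in the overload analysis (A₀ the facilities overloaded by more than max_b w(b), B_i = f⁻¹(A_i), A_{i+1} = N(B_i) \ ⋃_{j≤i} A_j). If j is the largest index with A_j nonempty and B_j is nonempty, then ∑_{b ∈ ⋃_{i≤j} B_i} w(b) ≤ ∑_{a ∈ ⋃_{i≤j} A_i} q(a). -/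
/-- Capacity-counting step in the overload analysis: with level sets defined as in
the reassignment lemma, if `j` is the largest index with `Asets j` nonempty and
`Bsets j` is nonempty, then the total client weight of `⋃_{i ≤ j} B i` is at most
the total capacity of `⋃_{i ≤ j} A i`. -/
theorem stmt_2 {A B : Type} [Fintype A] [Fintype B] [DecidableEq A] [DecidableEq B] [Nonempty B]
    (adj : A → B → Prop) [∀ a b, Decidable (adj a b)]
    (w : A → B → ℝ) (hw : ∀ a b, 0 ≤ w a b)
    (wb : B → ℝ)
    (hwb : ∀ b, wb b ≤ ∑ a ∈ Finset.univ.filter (fun a => adj a b), w a b)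
    (f : B → A) (hf : ∀ b, adj (f b) b)
    (Asets : ℕ → Finset A) (Bsets : ℕ → Finset B)
    (hA0 : ∀ a, a ∈ Asets 0 ↔
      (∑ b ∈ Finset.univ.filter (fun b => adj a b), w a b) +
        Finset.univ.sup' Finset.univ_nonempty wb <
        (∑ b ∈ Finset.univ.filter (fun b => f b = a), wb b))
    (hB : ∀ i b, b ∈ Bsets i ↔ f b ∈ Asets i)
    (hAsucc : ∀ i a, a ∈ Asets (i + 1) ↔
      ((∃ b ∈ Bsets i, adj a b) ∧ ∀ j' ≤ i, a ∉ Asets j'))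
    (j : ℕ) (hjne : (Asets j).Nonempty) (hjmax : ∀ i, j < i → Asets i = ∅)
    (hBj : (Bsets j).Nonempty) :
    ∑ b ∈ (Finset.range (j + 1)).biUnion Bsets, wb b ≤
      ∑ a ∈ (Finset.range (j + 1)).biUnion Asets,
        ∑ b ∈ Finset.univ.filter (fun b => adj a b), w a b := by
  set SA := (Finset.range (j + 1)).biUnion Asets with hSA
  set SB := (Finset.range (j + 1)).biUnion Bsets with hSB
  have key : ∀ b ∈ SB, ∀ a, adj a b → a ∈ SA := by
    intro b hb a hab
    simp only [hSB, Finset.mem_biUnion, Finset.mem_range] at hb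
    obtain ⟨i, hi, hbi⟩ := hb
    by_cases h : ∃ j' ≤ i, a ∈ Asets j'
    · obtain ⟨j', hj', haj⟩ := h
      exact Finset.mem_biUnion.2 ⟨j', Finset.mem_range.2 (by omega), haj⟩
    · push_neg at h
      have hmem : a ∈ Asets (i + 1) := (hAsucc i a).2 ⟨⟨b, hbi, hab⟩, h⟩
      by_cases hij : i + 1 ≤ j
      · exact Finset.mem_biUnion.2 ⟨i + 1, Finset.mem_range.2 (by omega), hmem⟩
      · have he : Asets (i + 1) = ∅ := hjmax _ (by omega)
        rw [he] at hmem
        exact absurd hmem (Finset.notMem_empty a)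
  calc ∑ b ∈ SB, wb b
      ≤ ∑ b ∈ SB, ∑ a ∈ SA.filter (fun a => adj a b), w a b := by
        apply Finset.sum_le_sum
        intro b hb
        refine (hwb b).trans_eq ?_
        apply Finset.sum_congr ?_ (fun _ _ => rfl)
        ext a
        simp only [Finset.mem_filter, Finset.mem_univ, true_and]
        exact ⟨fun h => ⟨key b hb a h, h⟩, fun h => h.2⟩
    _ = ∑ a ∈ SA, ∑ b ∈ SB.filter (fun b => adj a b), w a b := by
        simp only [Finset.sum_filter]
        exact Finset.sum_comm
    _ ≤ ∑ a ∈ SA, ∑ b ∈ Finset.univ.filter (fun b => adj a b), w a b := by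
        apply Finset.sum_le_sum
        intro a _
        apply Finset.sum_le_sum_of_subset_of_nonneg
        · intro b hb
          simp only [Finset.mem_filter] at hb ⊢
          exact ⟨Finset.mem_univ b, hb.2⟩
        · intro b _ _
          exact hw a b
end

section
/- Let T be a rooted tree with nonnegative edge lengths, root r, and a parameter R > 0. There exists a set S of vertices (breakpoints) containing r such that: (1) every vertex v of T has an ancestor in S at distance at most R from v; and (2) for any two distinct vertices of S lying on a common root-to-leaf path, their distance is more than εR, provided every root-to-leaf path has length at most some finite bound and ε ∈ (0,1); moreover any root-to-leaf path of length ℓ contains at most ⌈ℓ/(εR)⌉ + 1 breakpoints. -/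
/-!
Choose breakpoints greedily from the root down: a vertex becomes a breakpoint exactly when it lies
more than `R` below the deepest breakpoint among its proper ancestors. Then every vertex is within
`R` of its deepest breakpoint ancestor, and two comparable breakpoints are more than `R > εR`
apart, since the lower one was chosen more than `R` below the deepest breakpoint above it. The
breakpoints on the path from `v` to the root have depths in `[0, depth v]` that are pairwise more
than `εR` apart, so their values of `⌊depth / (εR)⌋` are distinct, which bounds their number.
-/

open Function

theorem Function.iterate_comparable {α : Type*} {f : α → α} {x a b : α} {m n : ℕ}
    (ha : f^[m] x = a) (hb : f^[n] x = b) :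
    (∃ k, f^[k] a = b) ∨ ∃ k, f^[k] b = a := by
  rcases le_total m n with h | h
  · obtain ⟨k, rfl⟩ := Nat.exists_eq_add_of_le h
    exact Or.inl ⟨k, by rw [← ha, ← iterate_add_apply, Nat.add_comm, hb]⟩
  · obtain ⟨k, rfl⟩ := Nat.exists_eq_add_of_le h
    exact Or.inr ⟨k, by rw [← hb, ← iterate_add_apply, Nat.add_comm, ha]⟩

theorem Function.apply_le_of_iterate_eq {α β : Type*} [Preorder β] {f : α → α} {g : α → β}
    (hg : ∀ x, g (f x) ≤ g x) {x a : α} {n : ℕ} (ha : f^[n] x = a) : g a ≤ g x := by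
  subst ha
  exact antitone_nat_of_succ_le (f := fun n => g (f^[n] x))
    (fun n => by simpa only [iterate_succ_apply'] using hg _) (Nat.zero_le n)

theorem Set.ncard_le_floor_div_add_one {α : Type*} {s : Set α} {f : α → ℝ} {x δ : ℝ}
    (hx : 0 ≤ x) (hδ : 0 < δ) (hf : ∀ a ∈ s, 0 ≤ f a ∧ f a ≤ x)
    (hsep : s.Pairwise fun a b => δ ≤ |f a - f b|) :
    (s.ncard : ℤ) ≤ ⌊x / δ⌋ + 1 := by
  have hcard : s.ncard ≤ ((Finset.Icc 0 ⌊x / δ⌋ : Finset ℤ) : Set ℤ).ncard := by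
    refine Set.ncard_le_ncard_of_injOn (fun a => ⌊f a / δ⌋) (fun a ha => ?_) ?_
    · simp only [Finset.coe_Icc, Set.mem_Icc]
      exact ⟨Int.floor_nonneg.2 (div_nonneg (hf a ha).1 hδ.le),
        Int.floor_mono (div_le_div_of_nonneg_right (hf a ha).2 hδ.le)⟩
    · intro a ha b hb hab
      by_contra hne
      have := Int.abs_sub_lt_one_of_floor_eq_floor hab
      rw [← sub_div, abs_div, abs_of_pos hδ, div_lt_one hδ] at this
      exact (hsep ha hb hne).not_gt this
  have hx' : 0 ≤ ⌊x / δ⌋ := Int.floor_nonneg.2 (div_nonneg hx hδ.le)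
  rw [Set.ncard_coe_finset, Int.card_Icc, sub_zero] at hcard
  omega

structure IsRootedTree {V : Type*} (p : V → V) (r : V) : Prop where
  map_root : p r = r
  exists_iterate_eq_root : ∀ v, ∃ n, p^[n] v = r

namespace IsRootedTree

variable {V : Type*} {p : V → V} {r : V}

noncomputable def height (p : V → V) (r v : V) : ℕ := sInf {n | p^[n] v = r}

theorem iterate_root (hT : IsRootedTree p r) (n : ℕ) : p^[n] r = r :=
  iterate_fixed hT.map_root n

theorem height_map_lt (hT : IsRootedTree p r) {v : V} (hv : v ≠ r) :
    height p r (p v) < height p r v := by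
  have hmem : p^[height p r v] v = r := Nat.sInf_mem (hT.exists_iterate_eq_root v)
  cases hh : height p r v with
  | zero => rw [hh] at hmem; exact absurd hmem hv
  | succ m =>
    rw [hh, iterate_succ_apply] at hmem
    exact Nat.lt_succ_of_le (Nat.sInf_le hmem)

@[elab_as_elim]
theorem induction (hT : IsRootedTree p r) {P : V → Prop} (root : P r)
    (step : ∀ v, v ≠ r → P (p v) → P v) (v : V) : P v := by
  obtain ⟨n, hn⟩ := hT.exists_iterate_eq_root v
  induction n generalizing v with
  | zero => rw [iterate_zero_apply] at hn; exact hn ▸ root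
  | succ n ih =>
    by_cases hv : v = r
    · exact hv ▸ root
    · exact step v hv (ih (p v) (by rwa [iterate_succ_apply] at hn))

theorem eq_root_of_iterate_succ_eq_self (hT : IsRootedTree p r) {v : V} {m : ℕ}
    (hv : p^[m + 1] v = v) : v = r := by
  obtain ⟨n, hn⟩ := hT.exists_iterate_eq_root v
  have hper : p^[(m + 1) * (n + 1)] v = v := (IsPeriodicPt.mul_const hv (n + 1)).eq
  rw [show (m + 1) * (n + 1) = (m * (n + 1) + 1) + n by ring, iterate_add_apply, hn,
    hT.iterate_root] at hper
  exact hper.symm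

theorem depth_root_le {depth : V → ℝ} (hT : IsRootedTree p r)
    (hmono : ∀ v, depth (p v) ≤ depth v) (v : V) : depth r ≤ depth v :=
  apply_le_of_iterate_eq hmono (hT.exists_iterate_eq_root v).choose_spec

variable (depth : V → ℝ) (R : ℝ)

open Classical in
/-- The deepest breakpoint on the path from `v` to the root, for the greedy choice in which a
vertex is a breakpoint (a fixed point of this map) exactly when it lies more than `R` below the
breakpoint of its parent. -/
noncomputable def breakpoint (hT : IsRootedTree p r) (v : V) : V :=
  if v = r then r
  else if R < depth v - depth (hT.breakpoint (p v)) then v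
  else hT.breakpoint (p v)
termination_by height p r v
decreasing_by all_goals exact hT.height_map_lt ‹_›

variable {depth R} (hT : IsRootedTree p r)

theorem breakpoint_root : hT.breakpoint depth R r = r := by
  rw [breakpoint, if_pos rfl]

theorem breakpoint_of_ne {v : V} (hv : v ≠ r) :
    hT.breakpoint depth R v = if R < depth v - depth (hT.breakpoint depth R (p v)) then v
      else hT.breakpoint depth R (p v) := by
  rw [breakpoint, if_neg hv]

theorem exists_iterate_eq_breakpoint (v : V) : ∃ n, p^[n] v = hT.breakpoint depth R v := by
  induction v using hT.induction with
  | root => exact ⟨0, hT.breakpoint_root.symm⟩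
  | step v hv ih =>
    obtain ⟨n, hn⟩ := ih
    rw [hT.breakpoint_of_ne hv]
    split_ifs
    · exact ⟨0, rfl⟩
    · exact ⟨n + 1, hn⟩

theorem breakpoint_breakpoint (v : V) :
    hT.breakpoint depth R (hT.breakpoint depth R v) = hT.breakpoint depth R v := by
  induction v using hT.induction with
  | root => rw [hT.breakpoint_root, hT.breakpoint_root]
  | step v hv ih =>
    rw [hT.breakpoint_of_ne hv]
    split_ifs with h
    · rw [hT.breakpoint_of_ne hv, if_pos h]
    · exact ih

theorem depth_sub_breakpoint_le (hR : 0 ≤ R) (v : V) :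
    depth v - depth (hT.breakpoint depth R v) ≤ R := by
  induction v using hT.induction with
  | root => rw [hT.breakpoint_root, sub_self]; exact hR
  | step v hv ih =>
    rw [hT.breakpoint_of_ne hv]
    split_ifs with h
    · rw [sub_self]; exact hR
    · exact not_lt.1 h

theorem depth_le_depth_breakpoint (hmono : ∀ v, depth (p v) ≤ depth v) {a : V}
    (ha : hT.breakpoint depth R a = a) (v : V) (hav : ∃ n, p^[n] v = a) :
    depth a ≤ depth (hT.breakpoint depth R v) := by
  induction v using hT.induction with
  | root =>
    obtain ⟨n, hn⟩ := hav
    rw [hT.iterate_root] at hn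
    rw [← hn, hT.breakpoint_root]
  | step v hv ih =>
    obtain ⟨_ | n, hn⟩ := hav
    · rw [iterate_zero_apply] at hn
      rw [hn, ha]
    · rw [hT.breakpoint_of_ne hv]
      split_ifs
      · exact apply_le_of_iterate_eq hmono hn
      · exact ih ⟨n, hn⟩

theorem breakpoint_eq_self_iff {v : V} (hv : v ≠ r) :
    hT.breakpoint depth R v = v ↔ R < depth v - depth (hT.breakpoint depth R (p v)) := by
  refine ⟨fun hfix => ?_, fun h => by rw [hT.breakpoint_of_ne hv, if_pos h]⟩
  by_contra h
  rw [hT.breakpoint_of_ne hv, if_neg h] at hfix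
  obtain ⟨n, hn⟩ := hT.exists_iterate_eq_breakpoint (depth := depth) (R := R) (p v)
  rw [hfix, ← iterate_succ_apply] at hn
  exact hv (hT.eq_root_of_iterate_succ_eq_self hn)

theorem lt_depth_sub_of_breakpoint (hmono : ∀ v, depth (p v) ≤ depth v) {a b : V}
    (ha : hT.breakpoint depth R a = a) (hb : hT.breakpoint depth R b = b) (hab : a ≠ b)
    (hba : ∃ n, p^[n] b = a) : R < depth b - depth a := by
  obtain ⟨_ | n, hn⟩ := hba
  · exact absurd hn.symm hab
  have hbr : b ≠ r := by
    rintro rfl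
    exact hab ((hT.iterate_root _).symm.trans hn).symm
  have hgap := (hT.breakpoint_eq_self_iff hbr).1 hb
  have hdepth := hT.depth_le_depth_breakpoint hmono ha (p b) ⟨n, hn⟩
  linarith

end IsRootedTree

theorem stmt_10_general {V : Type} [Fintype V]
    (r : V) (p : V → V) (hpr : p r = r)
    (hroot : ∀ v, ∃ n, p^[n] v = r)
    (depth : V → ℝ) (hdr : depth r = 0)
    (hmono : ∀ v, depth (p v) ≤ depth v)
    (R ε : ℝ) (hR : 0 < R) (hε0 : 0 < ε) (hε1 : ε < 1) :
    ∃ S : Finset V, r ∈ S ∧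
      (∀ v, ∃ a ∈ S, (∃ n, p^[n] v = a) ∧ depth v - depth a ≤ R) ∧
      (∀ a ∈ S, ∀ b ∈ S, a ≠ b → (∃ n, p^[n] b = a) → ε * R < depth b - depth a) ∧
      (∀ v, ({a | a ∈ S ∧ ∃ n, p^[n] v = a}.ncard : ℤ) ≤ ⌈depth v / (ε * R)⌉ + 1) := by
  classical
  have hT : IsRootedTree p r := ⟨hpr, hroot⟩
  have hdepth : ∀ v, 0 ≤ depth v := hdr ▸ hT.depth_root_le hmono
  have hsep : ∀ a b, hT.breakpoint depth R a = a → hT.breakpoint depth R b = b → a ≠ b →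
      (∃ n, p^[n] b = a) → ε * R < depth b - depth a := fun a b ha hb hab hba =>
    (mul_lt_of_lt_one_left hR hε1).trans (hT.lt_depth_sub_of_breakpoint hmono ha hb hab hba)
  refine ⟨({v | hT.breakpoint depth R v = v} : Finset V), by simpa using hT.breakpoint_root,
    fun v => ⟨_, by simpa using hT.breakpoint_breakpoint v, hT.exists_iterate_eq_breakpoint v,
      hT.depth_sub_breakpoint_le hR.le v⟩,
    fun a ha b hb => hsep a b (by simpa using ha) (by simpa using hb), fun v => ?_⟩
  refine (Set.ncard_le_floor_div_add_one (f := depth) (hdepth v) (mul_pos hε0 hR) ?_ ?_).trans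
    (by linarith [Int.floor_le_ceil (depth v / (ε * R))])
  · rintro a ⟨-, n, hn⟩
    exact ⟨hdepth a, apply_le_of_iterate_eq hmono hn⟩
  · rintro a ⟨ha, m, hm⟩ b ⟨hb, n, hn⟩ hab
    simp only [Finset.mem_filter, Finset.mem_univ, true_and] at ha hb
    rcases iterate_comparable hm hn with hb_above | ha_above
    · exact (hsep b a hb ha (Ne.symm hab) hb_above).le.trans (le_abs_self _)
    · exact (hsep a b ha hb hab ha_above).le.trans ((le_abs_self _).trans_eq (abs_sub_comm _ _))

/-- Breakpoints: in a finite rooted tree (given by a parent map `p` with root `r`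
and a depth function measuring distance from the root, nondecreasing along
parent-to-child edges), for any `R > 0` and `ε ∈ (0,1)` there is a set `S` of
breakpoints containing `r` such that (1) every vertex has an ancestor breakpoint
within distance `R`; (2) any two distinct comparable breakpoints are more than
`εR` apart; and (3) the root-to-`v` path contains at most `⌈depth v/(εR)⌉ + 1`
breakpoints. -/
theorem stmt_10 {V : Type} [Fintype V] [DecidableEq V]
    (r : V) (p : V → V) (hpr : p r = r)
    (hroot : ∀ v, ∃ n, p^[n] v = r)
    (depth : V → ℝ) (hdr : depth r = 0)
    (hmono : ∀ v, depth (p v) ≤ depth v)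
    (R ε : ℝ) (hR : 0 < R) (hε0 : 0 < ε) (hε1 : ε < 1) :
    ∃ S : Finset V, r ∈ S ∧
      (∀ v, ∃ a ∈ S, (∃ n, p^[n] v = a) ∧ depth v - depth a ≤ R) ∧
      (∀ a ∈ S, ∀ b ∈ S, a ≠ b → (∃ n, p^[n] b = a) → ε * R < depth b - depth a) ∧
      (∀ v, ({a | a ∈ S ∧ ∃ n, p^[n] v = a}.ncard : ℤ) ≤ ⌈depth v / (ε * R)⌉ + 1) :=
  stmt_10_general r p hpr hroot depth hdr hmono R ε hR hε0 hε1
end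

section
/- Consider the counterexample instance: a tree T rooted at r consisting of a central path P = r, v₁, ..., v_l with positive edge lengths, side subtrees T_i rooted at a child of v_i each of total length strictly less than εOPT/2, and a main subtree T_{l+1} rooted at a child of v_l of total length at least εOPT/2, with l ≥ 2. Then there is no set CR of vertices of T such that: (1) for each v ∈ CR and each child u of v, ℓ(T_u) < εOPT; (2) for each v ∈ CR, ℓ(T_v) ≥ εOPT; (3) no two distinct vertices of CR are in ancestor-descendant relationship; and (4) the subtrees rooted at CR vertices partition the leaves of T. -/
/-- Counterexample to Chen–Marx (Lemma A.1): for the instance consisting of a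
central path `r = vs 0, vs 1, …, vs l` (with `l ≥ 2`), side subtrees rooted at a
child `ts i` of `vs (i+1)` each of total subtree length `< εOPT/2`, and every
path vertex `vs (i+1)` having subtree length `> εOPT` (due to the main subtree),
there is no set `CR` of vertices satisfying: (1) each child subtree of a `CR`
vertex has length `< εOPT`; (2) each `CR` vertex has subtree length `≥ εOPT`;
(3) no two distinct `CR` vertices are ancestor-related; (4) the subtrees rooted
at `CR` vertices partition the leaves. -/
theorem stmt_14 {V : Type}
    (r : V) (p : V → V) (hpr : p r = r)
    (ε OPT : ℝ) (hε0 : 0 < ε) (hε1 : ε < 1) (hOPT : 0 < OPT)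
    (l : ℕ) (hl : 2 ≤ l)
    (vs : Fin (l + 1) → V) (hvs0 : vs 0 = r) (hvsinj : Function.Injective vs)
    (hpath : ∀ i : Fin l, p (vs i.succ) = vs i.castSucc)
    (ts : Fin l → V) (hts : ∀ i : Fin l, p (ts i) = vs i.succ)
    (hts_ne : ∀ i : Fin l, ts i ≠ vs i.succ)
    (L : V → ℝ) (hLmono : ∀ v x, (∃ n, p^[n] x = v) → L x ≤ L v)
    (hside : ∀ i : Fin l, L (ts i) < ε * OPT / 2)
    (hbig : ∀ i : Fin l, ε * OPT < L (vs i.succ))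
    (hleaf1 : ∃ x, (∃ n, p^[n] x = ts ⟨0, by omega⟩) ∧ ∀ y, p y = x → y = x) :
    ¬ ∃ CR : Set V,
      (∀ c ∈ CR, ∀ u, p u = c → u ≠ c → L u < ε * OPT) ∧
      (∀ c ∈ CR, ε * OPT ≤ L c) ∧
      (∀ c ∈ CR, ∀ c' ∈ CR, (∃ n, p^[n] c = c') → c = c') ∧
      (∀ x, (∀ y, p y = x → y = x) → ∃! c, c ∈ CR ∧ ∃ n, p^[n] x = c) := by

  rintro ⟨CR, h1, h2, h3, h4⟩
  obtain ⟨x, ⟨m, hm⟩, hxleaf⟩ := hleaf1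
  obtain ⟨c, ⟨hcCR, n, hn⟩, -⟩ := h4 x hxleaf
  set i0 : Fin l := ⟨0, by omega⟩
  set i1 : Fin l := ⟨1, by omega⟩
  have hεOPT : 0 < ε * OPT := mul_pos hε0 hOPT
  -- p^[j+1] (vs i0.succ) = r
  have hkey : ∀ j : ℕ, p^[j+1] (vs i0.succ) = r := by
    intro j
    induction j with
    | zero =>
      show p (vs i0.succ) = r
      rw [hpath i0]
      have : (i0.castSucc : Fin (l+1)) = 0 := by ext; rfl
      rw [this, hvs0]
    | succ j ih =>
      rw [Function.iterate_succ_apply', ih, hpr]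
  have hbig1 : ε * OPT < L (vs i0.succ) := hbig i0
  have hbig2 : ε * OPT < L (vs i1.succ) := hbig i1
  rcases le_or_gt n m with hnm | hnm
  · -- c is a descendant of ts i0
    have : ts i0 = p^[m - n] c := by
      rw [← hn, ← Function.iterate_add_apply]
      rw [show m - n + n = m by omega, hm]
    have hle : L c ≤ L (ts i0) := hLmono _ _ ⟨m - n, this.symm⟩
    have := h2 c hcCR
    have := hside i0
    linarith
  · -- c = p^[n-m] (ts i0), n - m ≥ 1
    have hc : c = p^[n - m] (ts i0) := by
      rw [← hm, ← Function.iterate_add_apply, show n - m + m = n by omega, hn]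
    rcases Nat.lt_or_ge (n - m) 2 with h2' | h2'
    · -- n - m = 1, c = vs i0.succ = vs 1
      have hnm1 : n - m = 1 := by omega
      have hc1 : c = vs i0.succ := by rw [hc, hnm1, Function.iterate_one, hts i0]
      -- child: vs i1.succ, since p (vs i1.succ) = vs i1.castSucc = vs i0.succ
      have hcs : (i1.castSucc : Fin (l+1)) = i0.succ := by
        ext; simp [i0, i1]
      have hchild : p (vs i1.succ) = c := by rw [hpath i1, hcs, hc1]
      have hne : vs i1.succ ≠ c := by
        rw [hc1]; intro h
        have := hvsinj h
        simp [Fin.ext_iff, i0, i1] at this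
      have := h1 c hcCR _ hchild hne
      linarith
    · -- n - m ≥ 2, c = r = vs 0
      have hcr : c = r := by
        rw [hc, show n - m = (n - m - 2) + 1 + 1 by omega,
          Function.iterate_succ_apply, hts i0, hkey]
      have hchild : p (vs i0.succ) = c := by
        have h0 : (i0.castSucc : Fin (l+1)) = 0 := by ext; rfl
        rw [hpath i0, h0, hvs0, hcr]
      have hne : vs i0.succ ≠ c := by
        rw [hcr, ← hvs0]; intro h
        have := hvsinj h
        simp [Fin.ext_iff, i0] at this
      have := h1 c hcCR _ hchild hne
      linarith
end

section
/- Let D > 0 and ε̂ ∈ (0,1]. Suppose a tour covers clients in sets X₁ (leaf clusters, each of length ≥ (ε̂/4)D, each fully covered by the tour which has length ≤ (1+O(ε̂))D), X₂ (small clusters, with |X₂| ≤ 2|X₁|), and X₃ (edge clusters, in each of which the tour's segment has length ≥ (ε̂³/2)D, segments pairwise edge-disjoint). Then |X₁| = O(1/ε̂), |X₂| = O(1/ε̂), and |X₃| = O(1/ε̂³); hence the tour covers clients in O(1/ε̂³) clusters in total. -/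
/-- Cluster-count bound concluding the structure theorem: a tour of length at
most `(1 + c·ε̂)D` fully covers the leaf clusters of `X1` (each of length at
least `(ε̂/4)D`, contributing twice their length to the tour, disjointly), covers
`n2 ≤ 2·|X1|` small clusters, and has pairwise edge-disjoint segments of length
at least `(ε̂³/2)D` in the edge clusters of `X3`.  Then
`|X1| ≤ 2(1+cε̂)/ε̂`, `n2 ≤ 4(1+cε̂)/ε̂`, `|X3| ≤ 2(1+cε̂)/ε̂³`, and the total
number of clusters is at most `8(1+cε̂)/ε̂³ = O(1/ε̂³)`. -/
theorem stmt_19 {ι κ : Type} (D eps c tourLen : ℝ)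
    (hD : 0 < D) (heps0 : 0 < eps) (heps1 : eps ≤ 1) (hc : 0 ≤ c)
    (htour : tourLen ≤ (1 + c * eps) * D)
    (X1 : Finset ι) (clen : ι → ℝ)
    (hclen : ∀ i ∈ X1, eps / 4 * D ≤ clen i)
    (hX1 : ∑ i ∈ X1, 2 * clen i ≤ tourLen)
    (n2 : ℕ) (hn2 : n2 ≤ 2 * X1.card)
    (X3 : Finset κ) (slen : κ → ℝ)
    (hslen : ∀ i ∈ X3, eps ^ 3 / 2 * D ≤ slen i)
    (hX3 : ∑ i ∈ X3, slen i ≤ tourLen) :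
    (X1.card : ℝ) ≤ 2 * (1 + c * eps) / eps ∧
    (n2 : ℝ) ≤ 4 * (1 + c * eps) / eps ∧
    (X3.card : ℝ) ≤ 2 * (1 + c * eps) / eps ^ 3 ∧
    ((X1.card + n2 + X3.card : ℕ) : ℝ) ≤ 8 * (1 + c * eps) / eps ^ 3 := by

  have heps3 : (0:ℝ) < eps ^ 3 := by positivity
  have h1 : (X1.card : ℝ) * (eps / 2 * D) ≤ tourLen := by
    calc (X1.card : ℝ) * (eps / 2 * D) = ∑ _i ∈ X1, eps / 2 * D := by
          rw [Finset.sum_const, nsmul_eq_mul]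
      _ ≤ ∑ i ∈ X1, 2 * clen i := by
          apply Finset.sum_le_sum
          intro i hi
          have := hclen i hi
          nlinarith
      _ ≤ tourLen := hX1
  have h3 : (X3.card : ℝ) * (eps ^ 3 / 2 * D) ≤ tourLen := by
    calc (X3.card : ℝ) * (eps ^ 3 / 2 * D) = ∑ _i ∈ X3, eps ^ 3 / 2 * D := by
          rw [Finset.sum_const, nsmul_eq_mul]
      _ ≤ ∑ i ∈ X3, slen i := Finset.sum_le_sum hslen
      _ ≤ tourLen := hX3
  have hb1 : (X1.card : ℝ) ≤ 2 * (1 + c * eps) / eps := by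
    rw [le_div_iff₀ heps0]
    nlinarith
  have hb3 : (X3.card : ℝ) ≤ 2 * (1 + c * eps) / eps ^ 3 := by
    rw [le_div_iff₀ heps3]
    nlinarith
  have hn2' : (n2 : ℝ) ≤ 2 * X1.card := by exact_mod_cast hn2
  have hb2 : (n2 : ℝ) ≤ 4 * (1 + c * eps) / eps := by
    calc (n2 : ℝ) ≤ 2 * X1.card := hn2'
      _ ≤ 2 * (2 * (1 + c * eps) / eps) := by linarith
      _ = 4 * (1 + c * eps) / eps := by ring
  refine ⟨hb1, hb2, hb3, ?_⟩
  push_cast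
  have hkey : 2 * (1 + c * eps) / eps ≤ 2 * (1 + c * eps) / eps ^ 3 := by
    apply div_le_div_of_nonneg_left (by nlinarith) heps3
    nlinarith [sq_nonneg eps]
  have := hb1.trans hkey
  have hb2' : (n2 : ℝ) ≤ 4 * (1 + c * eps) / eps ^ 3 := by
    calc (n2:ℝ) ≤ 4 * (1 + c * eps) / eps := hb2
      _ ≤ 4 * (1 + c * eps) / eps ^ 3 := by
        apply div_le_div_of_nonneg_left (by nlinarith) heps3
        nlinarith [sq_nonneg eps]
  have h8 : 2*(1 + c*eps)/eps^3 + 4*(1 + c*eps)/eps^3 + 2*(1 + c*eps)/eps^3 = 8*(1 + c*eps)/eps^3 := by ring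
  linarith
end
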